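/- arXiv:1304.5822 — 3 statements merged into one kernel-verified Lean document; each statement's English description precedes it below -/
import Mathlib

section
/- The value x_1 = 1 is feasible, and the feasible set is upward closed: if x_1 ∈ [0,1] is feasible and x_1 ≤ y ≤ 1, then y is feasible. Consequently, writing x_1° = inf{x_1 ∈ [0,1] : x_1 is feasible}, the feasible set equals the interval [x_1°, 1] if x_1° is feasible and equals (x_1°, 1] otherwise. -/
/-!
Write `g_i = w_{i-1} - w_i`. The upward equations say `x_{i+1} = 1 - g_i / (w_i - d_i)`,
`g_{i+1} = w_i g_i / (w_i - d_i)` and `w_{i+1} = w_i - g_{i+1}`. Since `w ↦ w / (w - e)` is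
decreasing on `w > e ≥ 0`, an induction on `i` shows that raising `x_1` (up to `1`) raises
every `w_i` and lowers every `g_i ≥ 0`; so each `x_i` increases without exceeding `1`, and
`w_i > d_i` persists. At `x_1 = 1` every `w_i` equals `d_0 > d_i`. A set of reals that contains,
with each of its points `x`, the whole interval `[x, 1]`, and nothing above `1`, is `[inf, 1]` or
`(inf, 1]`.
-/

/-- `upP d x1 i = (w_i, w_{i+1})`: the pair of consecutive values reaching nodes
`i` and `i+1`, computed from `x_1 = x1` via the upward equations
`x_{i+1} = 1 − ((1 − x_i)·w_{i−1})/(x_i·w_{i−1} − d_i)`, i.e.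
`w_{i+1} = w_i · (1 − (w_{i−1} − w_i)/(w_i − d_i))` (using `w_i = x_i·w_{i−1}`). -/
noncomputable def upP (d : ℕ → ℝ) (x1 : ℝ) : ℕ → ℝ × ℝ
  | 0 => (d 0, d 0 * x1)
  | i + 1 =>
      let p := upP d x1 i
      (p.2, p.2 * (1 - (p.1 - p.2) / (p.2 - d (i + 1))))

/-- `upW d x1 i = w_i`, the value reaching node `i` under the upward equations
started at `x_1 = x1`. -/
noncomputable def upW (d : ℕ → ℝ) (x1 : ℝ) (i : ℕ) : ℝ :=
  (upP d x1 i).1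

/-- `upX d x1 i = x_i`, the share on edge `e_i` computed from `x_1 = x1` by the
upward equations `x_{i+1} = 1 − ((1 − x_i)·w_{i−1})/(x_i·w_{i−1} − d_i)`
(rewritten as `x_{i+1} = 1 − (w_{i−1} − w_i)/(w_i − d_i)`). -/
noncomputable def upX (d : ℕ → ℝ) (x1 : ℝ) : ℕ → ℝ
  | 0 => 1
  | 1 => x1
  | i + 2 => 1 - (upW d x1 i - upW d x1 (i + 1)) / (upW d x1 (i + 1) - d (i + 1))

/-- `x1` is feasible: `x1 ∈ [0,1]` and the values produced by the upward
equations satisfy `x_i ∈ [0,1]` and `w_i > d_i` for all `i = 1,…,n`. -/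
def Feasible (n : ℕ) (d : ℕ → ℝ) (x1 : ℝ) : Prop :=
  0 ≤ x1 ∧ x1 ≤ 1 ∧
    ∀ i, 1 ≤ i → i ≤ n → (0 ≤ upX d x1 i ∧ upX d x1 i ≤ 1) ∧ d i < upW d x1 i

open Set

section UpwardClosed

variable {α : Type*} [ConditionallyCompleteLinearOrder α] {S : Set α} {b : α}

theorem eq_Icc_csInf_of_forall_Icc_subset (hS : ∀ x ∈ S, Icc x b ⊆ S) (hSb : S ⊆ Iic b)
    (hbdd : BddBelow S) (hmem : sInf S ∈ S) : S = Icc (sInf S) b :=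
  Subset.antisymm (fun _ hx => ⟨csInf_le hbdd hx, hSb hx⟩) (hS _ hmem)

theorem eq_Ioc_csInf_of_forall_Icc_subset (hS : ∀ x ∈ S, Icc x b ⊆ S) (hSb : S ⊆ Iic b)
    (hne : S.Nonempty) (hbdd : BddBelow S) (hmem : sInf S ∉ S) : S = Ioc (sInf S) b := by
  refine Subset.antisymm
    (fun x hx => ⟨(csInf_le hbdd hx).lt_of_ne fun h => hmem (h ▸ hx), hSb hx⟩) ?_
  rintro x ⟨hlt, hxb⟩
  obtain ⟨w, hw, hwx⟩ := exists_lt_of_csInf_lt hne hlt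
  exact hS w hw ⟨hwx.le, hxb⟩

end UpwardClosed

theorem mul_div_sub_le_mul_div_sub {e B B' g g' : ℝ} (he : 0 ≤ e) (heB : e < B) (hB : B ≤ B')
    (hg' : 0 ≤ g') (hg : g' ≤ g) : B' * g' / (B' - e) ≤ B * g / (B - e) := by
  rw [div_le_div_iff₀ (by linarith) (by linarith)]
  have hB'e : 0 ≤ B' - e := by linarith
  nlinarith [mul_nonneg (mul_nonneg (he.trans heB.le) (sub_nonneg.2 hg)) hB'e,
    mul_nonneg (mul_nonneg hg' he) (sub_nonneg.2 hB)]

section UpwardEquations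

variable {n : ℕ} {d : ℕ → ℝ} {x y : ℝ}

theorem upW_zero : upW d x 0 = d 0 := rfl

theorem upW_one : upW d x 1 = d 0 * x := rfl

theorem upX_add_two (i : ℕ) :
    upX d x (i + 2) = 1 - (upW d x i - upW d x (i + 1)) / (upW d x (i + 1) - d (i + 1)) := rfl

theorem upW_add_two (i : ℕ) : upW d x (i + 2) = upW d x (i + 1) * upX d x (i + 2) := rfl

theorem upW_sub_upW_add_two (i : ℕ) :
    upW d x (i + 1) - upW d x (i + 2) =
      upW d x (i + 1) * (upW d x i - upW d x (i + 1)) / (upW d x (i + 1) - d (i + 1)) := by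
  rw [upW_add_two, upX_add_two]
  ring

theorem upW_start_one (i : ℕ) : upW d 1 i = d 0 := by
  suffices ∀ i, upW d 1 i = d 0 ∧ upW d 1 (i + 1) = d 0 from (this i).1
  intro i
  induction i with
  | zero => exact ⟨rfl, mul_one _⟩
  | succ j ih => exact ⟨ih.2, by rw [upW_add_two, upX_add_two, ih.1, ih.2]; simp⟩

theorem upX_start_one : ∀ i, 1 ≤ i → upX d 1 i = 1
  | 1, _ => rfl
  | _ + 2, _ => by rw [upX_add_two, upW_start_one, upW_start_one]; simp

theorem feasible_one (hd : ∀ i, 1 ≤ i → i ≤ n → d i < d 0) : Feasible n d 1 :=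
  ⟨zero_le_one, le_rfl, fun i hi hin => by
    rw [upX_start_one i hi, upW_start_one]
    exact ⟨⟨zero_le_one, le_rfl⟩, hd i hi hin⟩⟩

theorem upW_mono_and_gap_anti (hd0 : 0 < d 0) (hd : ∀ i, 1 ≤ i → i ≤ n → 0 ≤ d i)
    (hx : Feasible n d x) (hxy : x ≤ y) (hy : y ≤ 1) :
    ∀ i, i + 1 ≤ n →
      upW d x (i + 1) ≤ upW d y (i + 1) ∧ 0 ≤ upW d y i - upW d y (i + 1) ∧
        upW d y i - upW d y (i + 1) ≤ upW d x i - upW d x (i + 1) := by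
  intro i
  induction i with
  | zero =>
    intro _
    simp only [zero_add, upW_zero, upW_one]
    refine ⟨mul_le_mul_of_nonneg_left hxy hd0.le, ?_, ?_⟩ <;> nlinarith
  | succ i ih =>
    intro hin
    obtain ⟨hw, hg', hg⟩ := ih (by omega)
    have he := hd (i + 1) (by omega) (by omega)
    have heB := (hx.2.2 (i + 1) (by omega) (by omega)).2
    refine ⟨?_, ?_, ?_⟩
    · linarith [mul_div_sub_le_mul_div_sub he heB hw hg' hg,
        upW_sub_upW_add_two (d := d) (x := x) i, upW_sub_upW_add_two (d := d) (x := y) i]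
    · rw [upW_sub_upW_add_two]
      exact div_nonneg (mul_nonneg (by linarith) hg') (by linarith)
    · rw [upW_sub_upW_add_two, upW_sub_upW_add_two]
      exact mul_div_sub_le_mul_div_sub he heB hw hg' hg

theorem Feasible.mono (hd0 : 0 < d 0) (hd : ∀ i, 1 ≤ i → i ≤ n → 0 ≤ d i)
    (hx : Feasible n d x) (hxy : x ≤ y) (hy : y ≤ 1) : Feasible n d y := by
  have hinv := upW_mono_and_gap_anti hd0 hd hx hxy hy
  refine ⟨hx.1.trans hxy, hy, fun i hi hin => ?_⟩
  obtain ⟨j, rfl⟩ : ∃ j, i = j + 1 := ⟨i - 1, by omega⟩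
  refine ⟨?_, (hx.2.2 _ hi hin).2.trans_le (hinv j hin).1⟩
  rcases j with _ | k
  · exact ⟨hx.1.trans hxy, hy⟩
  obtain ⟨hw, hg', hg⟩ := hinv k (by omega)
  have heB := (hx.2.2 (k + 1) (by omega) (by omega)).2
  have hxk := (hx.2.2 (k + 2) hi hin).1.1
  rw [upX_add_two] at hxk ⊢
  have hden : 0 < upW d y (k + 1) - d (k + 1) := by linarith
  have hratio := div_le_div₀ (hg'.trans hg) hg (sub_pos.2 heB) (sub_le_sub_right hw (d (k + 1)))
  exact ⟨by linarith, by linarith [div_nonneg hg' hden.le]⟩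

end UpwardEquations

theorem feasible_region_structure_general (n : ℕ) (d : ℕ → ℝ)
    (hd0 : 0 < d 0) (hd : ∀ i, 1 ≤ i → i ≤ n → 0 ≤ d i ∧ d i < d 0) :
    Feasible n d 1 ∧
    (∀ x1 y : ℝ, Feasible n d x1 → x1 ≤ y → y ≤ 1 → Feasible n d y) ∧
    (Feasible n d (sInf {x1 | Feasible n d x1}) →
      {x1 | Feasible n d x1} = Set.Icc (sInf {x1 | Feasible n d x1}) 1) ∧
    (¬ Feasible n d (sInf {x1 | Feasible n d x1}) →
      {x1 | Feasible n d x1} = Set.Ioc (sInf {x1 | Feasible n d x1}) 1) := by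
  have hone : Feasible n d 1 := feasible_one fun i hi hin => (hd i hi hin).2
  have hmono : ∀ x1 y : ℝ, Feasible n d x1 → x1 ≤ y → y ≤ 1 → Feasible n d y :=
    fun _ _ hx hxy hy => hx.mono hd0 (fun i hi hin => (hd i hi hin).1) hxy hy
  have hIcc : ∀ x ∈ {x1 | Feasible n d x1}, Icc x 1 ⊆ {x1 | Feasible n d x1} :=
    fun x hx _ hy => hmono x _ hx hy.1 hy.2
  have hle : {x1 | Feasible n d x1} ⊆ Iic 1 := fun _ hx => hx.2.1
  have hbdd : BddBelow {x1 | Feasible n d x1} := ⟨0, fun _ hx => hx.1⟩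
  exact ⟨hone, hmono, eq_Icc_csInf_of_forall_Icc_subset hIcc hle hbdd,
    eq_Ioc_csInf_of_forall_Icc_subset hIcc hle ⟨1, hone⟩ hbdd⟩

/-- `x1 = 1` is feasible, the feasible set is upward closed, and consequently it
equals `[x1°, 1]` or `(x1°, 1]` where `x1°` is the infimum of the feasible set,
according to whether `x1°` is itself feasible. -/
theorem feasible_region_structure (n : ℕ) (hn : 1 ≤ n) (d : ℕ → ℝ)
    (hd0 : 0 < d 0) (hd : ∀ i, 1 ≤ i → i ≤ n → 0 ≤ d i ∧ d i < d 0) :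
    Feasible n d 1 ∧
    (∀ x1 y : ℝ, Feasible n d x1 → x1 ≤ y → y ≤ 1 → Feasible n d y) ∧
    (Feasible n d (sInf {x1 | Feasible n d x1}) →
      {x1 | Feasible n d x1} = Set.Icc (sInf {x1 | Feasible n d x1}) 1) ∧
    (¬ Feasible n d (sInf {x1 | Feasible n d x1}) →
      {x1 | Feasible n d x1} = Set.Ioc (sInf {x1 | Feasible n d x1}) 1) :=
  feasible_region_structure_general n d hd0 hd
end

section
/- Strict monotonicity of payoffs: fix i ∈ {1,…,n} and let d_i' satisfy d_i < d_i' < d_0. Let x* be the unique fixed point of the instance with values (d_0, d_1,…,d_i,…,d_n) and x*' the unique fixed point of the instance where d_i is replaced by d_i' (all other values unchanged). Then the payoff of node i strictly increases: (1 − x*'_{i+1})·w*'_i > (1 − x*_{i+1})·w*_i, where w*_i = d_0·∏_{j=1}^{i} x*_j, w*'_i = d_0·∏_{j=1}^{i} x*'_j, and x*_{n+1} = x*'_{n+1} = 0 by convention. -/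
/-!
With `W_k = d_0 x_1 ⋯ x_k` and the payoff `P_k = (1 - x_{k+1}) W_k`, one has `W_k = W_{k+1} + P_k`,
`P_n = W_n`, and the bargaining equation at node `k + 1` reads
`P_k = P_{k+1} (1 - d_{k+1} / W_{k+1})` with `0 < P_k` and `d_{k+1} < W_{k+1}`. So `(W_k, P_k)` is
increasing in `(W_{k+1}, P_{k+1})` and strictly decreasing in `d_{k+1}`.
Suppose raising `d_i` did not raise `P_i`. Running the recursion up from `i` to `n`, where
`P_n = W_n`, shows that `W_i` did not increase either. Running it down from `i`, the larger `d_i`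
makes `P_{i-1}` and `W_{i-1}` drop strictly, and the drop persists down to `W_0 = d_0`, which is
the same in both instances.
-/

/-- `pathW d x i` is the value `w_i = d_0 · ∏_{j=1}^{i} x_j` reaching node `i`
in a path bargaining instance with values `d` and shares `x`. -/
noncomputable def pathW (d x : ℕ → ℝ) (i : ℕ) : ℝ :=
  d 0 * ∏ j ∈ Finset.Icc 1 i, x j

/-- A share vector: `x_i ∈ [0,1]` for `i = 1,…,n`. -/
def IsShareVector (n : ℕ) (x : ℕ → ℝ) : Prop :=
  ∀ i, 1 ≤ i → i ≤ n → 0 ≤ x i ∧ x i ≤ 1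

/-- A fixed point of the path bargaining equations
`(1 − x_i)·w_{i−1} = (1 − x_{i+1})·(x_i·w_{i−1} − d_i)` for `i = 1,…,n`,
with the convention `x_{n+1} = 0`. -/
def IsPathFixedPoint (n : ℕ) (d x : ℕ → ℝ) : Prop :=
  IsShareVector n x ∧
  ∀ i, 1 ≤ i → i ≤ n →
    (1 - x i) * pathW d x (i - 1) =
      (1 - (if i = n then 0 else x (i + 1))) * (x i * pathW d x (i - 1) - d i)

noncomputable def nextShare (n : ℕ) (x : ℕ → ℝ) (k : ℕ) : ℝ :=
  if k = n then 0 else x (k + 1)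

noncomputable def pathPayoff (n : ℕ) (d x : ℕ → ℝ) (k : ℕ) : ℝ :=
  (1 - nextShare n x k) * pathW d x k

def IsPathInstance (n : ℕ) (d : ℕ → ℝ) : Prop :=
  0 < d 0 ∧ ∀ j, 1 ≤ j → j ≤ n → 0 ≤ d j ∧ d j < d 0

section Path

variable {n k : ℕ} {d x : ℕ → ℝ}

@[simp]
lemma pathW_zero (d x : ℕ → ℝ) : pathW d x 0 = d 0 := by
  simp [pathW]

lemma pathW_succ (d x : ℕ → ℝ) (k : ℕ) : pathW d x (k + 1) = pathW d x k * x (k + 1) := by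
  rw [pathW, pathW, Finset.prod_Icc_succ_top (by omega), mul_assoc]

lemma nextShare_self : nextShare n x n = 0 := if_pos rfl

lemma nextShare_of_lt (hk : k < n) : nextShare n x k = x (k + 1) := if_neg hk.ne

lemma pathPayoff_self : pathPayoff n d x n = pathW d x n := by
  simp [pathPayoff, nextShare_self]

lemma pathPayoff_of_lt (hk : k < n) : pathPayoff n d x k = (1 - x (k + 1)) * pathW d x k := by
  rw [pathPayoff, nextShare_of_lt hk]

lemma pathW_eq_add_pathPayoff (hk : k < n) :
    pathW d x k = pathW d x (k + 1) + pathPayoff n d x k := by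
  rw [pathPayoff_of_lt hk, pathW_succ]
  ring

lemma IsShareVector.nextShare_le_one (hx : IsShareVector n x) (hk : k ≤ n) :
    nextShare n x k ≤ 1 := by
  rcases hk.lt_or_eq with hk | rfl
  · rw [nextShare_of_lt hk]
    exact (hx (k + 1) (by omega) hk).2
  · rw [nextShare_self]
    exact zero_le_one

lemma IsPathInstance.update {i : ℕ} {c : ℝ} (hI : IsPathInstance n d) (hi : i ≠ 0)
    (hc0 : 0 ≤ c) (hc : c < d 0) : IsPathInstance n (Function.update d i c) := by
  have h0 : Function.update d i c 0 = d 0 := Function.update_of_ne (Ne.symm hi) _ _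
  refine ⟨h0 ▸ hI.1, fun j hj1 hjn => ?_⟩
  rw [h0]
  rcases eq_or_ne j i with rfl | hji
  · rw [Function.update_self]
    exact ⟨hc0, hc⟩
  · rw [Function.update_of_ne hji]
    exact hI.2 j hj1 hjn

namespace IsPathFixedPoint

lemma eq_succ (hx : IsPathFixedPoint n d x) (hk : k < n) :
    (1 - x (k + 1)) * pathW d x k =
      (1 - nextShare n x (k + 1)) * (pathW d x (k + 1) - d (k + 1)) := by
  rw [pathW_succ, mul_comm (pathW d x k)]
  exact hx.2 (k + 1) (by omega) hk

lemma pathPayoff_eq_mul_sub (hx : IsPathFixedPoint n d x) (hk : k < n) :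
    pathPayoff n d x k = (1 - nextShare n x (k + 1)) * (pathW d x (k + 1) - d (k + 1)) := by
  rw [pathPayoff_of_lt hk]
  exact hx.eq_succ hk

lemma pathW_pos (hI : IsPathInstance n d) (hx : IsPathFixedPoint n d x) (hk : k ≤ n) :
    0 < pathW d x k := by
  induction k with
  | zero => simpa using hI.1
  | succ k ih =>
    have hWk := ih (by omega)
    have hfac : 0 ≤ 1 - nextShare n x (k + 1) := sub_nonneg.2 (hx.1.nextShare_le_one hk)
    have hdk : 0 ≤ d (k + 1) := (hI.2 (k + 1) (by omega) hk).1
    have heq := hx.eq_succ hk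
    have hxk : 0 < x (k + 1) := by
      refine (hx.1 (k + 1) (by omega) hk).1.lt_of_ne fun h => ?_
      rw [pathW_succ, ← h] at heq
      nlinarith [mul_nonneg hfac hdk]
    rw [pathW_succ]
    exact mul_pos hWk hxk

lemma share_eq_one_of_succ (hI : IsPathInstance n d) (hx : IsPathFixedPoint n d x)
    (hk : k + 1 < n) (h : x (k + 2) = 1) : x (k + 1) = 1 := by
  have heq := hx.eq_succ (k := k) (by omega)
  rw [nextShare_of_lt hk, h, sub_self, zero_mul] at heq
  have hW := hx.pathW_pos hI (k := k) (by omega)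
  linarith [(mul_eq_zero.1 heq).resolve_right hW.ne']

lemma pathW_eq_of_share_eq_one (hI : IsPathInstance n d) (hx : IsPathFixedPoint n d x)
    (hk : k < n) (h : x (k + 1) = 1) : pathW d x k = d 0 := by
  have hone : ∀ m (hmk : m ≤ k), x (m + 1) = 1 := by
    intro m hmk
    induction hmk using Nat.decreasingInduction with
    | self => exact h
    | of_succ m hmk ih => exact hx.share_eq_one_of_succ hI (by omega) ih
  rw [pathW, Finset.prod_eq_one fun m hm => ?_, mul_one]
  rw [Finset.mem_Icc] at hm
  obtain ⟨m, rfl⟩ : ∃ j, m = j + 1 := ⟨m - 1, by omega⟩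
  exact hone m (by omega)

lemma nextShare_eq_one_of_share_eq_one (hI : IsPathInstance n d) (hx : IsPathFixedPoint n d x)
    (hk : k < n) (h : x (k + 1) = 1) : nextShare n x (k + 1) = 1 := by
  have heq := hx.eq_succ hk
  rw [pathW_succ, h, sub_self, zero_mul, mul_one, hx.pathW_eq_of_share_eq_one hI hk h] at heq
  have hd := (hI.2 (k + 1) (by omega) hk).2
  linarith [(mul_eq_zero.1 heq.symm).resolve_right (by linarith)]

/-- A share `x_{k+1} = 1` propagates down to node `1`, so `W_k = d_0 > d_{k+1}`; the equation at
`k + 1` then forces `x_{k+2} = 1`, and so on up to `x_{n+1} = 0`. -/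
lemma share_lt_one (hI : IsPathInstance n d) (hx : IsPathFixedPoint n d x) (hk : k < n) :
    x (k + 1) < 1 := by
  refine (hx.1 (k + 1) (by omega) hk).2.lt_of_ne fun h => ?_
  have hone : ∀ m, k ≤ m → m < n → x (m + 1) = 1 := by
    intro m hkm
    induction m, hkm using Nat.le_induction with
    | base => exact fun _ => h
    | succ m hkm ih =>
      intro hmn
      have hnext := hx.nextShare_eq_one_of_share_eq_one hI (by omega) (ih (by omega))
      rwa [nextShare_of_lt hmn] at hnext
  have hlast := hx.nextShare_eq_one_of_share_eq_one hI (k := n - 1) (by omega)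
    (hone (n - 1) (by omega) (by omega))
  rw [Nat.sub_add_cancel (by omega), nextShare_self] at hlast
  exact zero_ne_one hlast

lemma one_sub_nextShare_pos (hI : IsPathInstance n d) (hx : IsPathFixedPoint n d x)
    (hk : k ≤ n) : 0 < 1 - nextShare n x k := by
  rcases hk.lt_or_eq with hk | rfl
  · rw [nextShare_of_lt hk, sub_pos]
    exact hx.share_lt_one hI hk
  · rw [nextShare_self, sub_zero]
    exact one_pos

lemma pathPayoff_pos (hI : IsPathInstance n d) (hx : IsPathFixedPoint n d x) (hk : k ≤ n) :
    0 < pathPayoff n d x k :=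
  mul_pos (hx.one_sub_nextShare_pos hI hk) (hx.pathW_pos hI hk)

lemma lt_pathW_succ (hI : IsPathInstance n d) (hx : IsPathFixedPoint n d x) (hk : k < n) :
    d (k + 1) < pathW d x (k + 1) := by
  have hP := hx.pathPayoff_pos hI hk.le
  rw [hx.pathPayoff_eq_mul_sub hk] at hP
  exact sub_pos.1 (pos_of_mul_pos_right hP (hx.one_sub_nextShare_pos hI hk).le)

lemma pathPayoff_eq_mul_one_sub_div (hI : IsPathInstance n d) (hx : IsPathFixedPoint n d x)
    (hk : k < n) :
    pathPayoff n d x k =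
      pathPayoff n d x (k + 1) * (1 - d (k + 1) / pathW d x (k + 1)) := by
  have hW := (hx.pathW_pos hI hk).ne'
  rw [hx.pathPayoff_eq_mul_sub hk, pathPayoff]
  field_simp

end IsPathFixedPoint

end Path

lemma mul_one_sub_div_lt_mul_one_sub_div {p p' w w' c c' : ℝ} (hp' : 0 < p') (hpp : p' ≤ p)
    (hw : w' ≤ w) (hc : 0 ≤ c) (hcc : c ≤ c') (hcw : c' < w') (h : p' < p ∨ c < c') :
    p' * (1 - c' / w') < p * (1 - c / w) := by
  have hw' : 0 < w' := hc.trans_lt (hcc.trans_lt hcw)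
  have ha' : 0 < 1 - c' / w' := sub_pos.2 ((div_lt_one hw').2 hcw)
  have hdiv : c / w ≤ c / w' := div_le_div_of_nonneg_left hc hw' hw
  rcases h with hp | hc'
  · have hle : c / w ≤ c' / w' := hdiv.trans (div_le_div_of_nonneg_right hcc hw'.le)
    calc p' * (1 - c' / w') < p * (1 - c' / w') := mul_lt_mul_of_pos_right hp ha'
      _ ≤ p * (1 - c / w) := mul_le_mul_of_nonneg_left (by linarith) (by linarith)
  · have hlt : c / w < c' / w' := hdiv.trans_lt (div_lt_div_of_pos_right hc' hw')
    calc p' * (1 - c' / w') < p' * (1 - c / w) := mul_lt_mul_of_pos_left (by linarith) hp'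
      _ ≤ p * (1 - c / w) := mul_le_mul_of_nonneg_right hpp (by linarith)

section Comparison

variable {n k : ℕ} {d d' x x' : ℕ → ℝ}

lemma pathPayoff_lt_of_succ (hI : IsPathInstance n d) (hI' : IsPathInstance n d')
    (hx : IsPathFixedPoint n d x) (hx' : IsPathFixedPoint n d' x') (hk : k < n)
    (hP : pathPayoff n d' x' (k + 1) ≤ pathPayoff n d x (k + 1))
    (hW : pathW d' x' (k + 1) ≤ pathW d x (k + 1)) (hd : d (k + 1) ≤ d' (k + 1))
    (hstrict : pathPayoff n d' x' (k + 1) < pathPayoff n d x (k + 1) ∨ d (k + 1) < d' (k + 1)) :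
    pathPayoff n d' x' k < pathPayoff n d x k := by
  rw [hx.pathPayoff_eq_mul_one_sub_div hI hk, hx'.pathPayoff_eq_mul_one_sub_div hI' hk]
  exact mul_one_sub_div_lt_mul_one_sub_div (hx'.pathPayoff_pos hI' hk) hP hW
    (hI.2 (k + 1) (by omega) hk).1 hd (hx'.lt_pathW_succ hI' hk) hstrict

lemma pathW_lt_of_pathPayoff_lt_of_succ (hk : k < n)
    (hP : pathPayoff n d' x' k < pathPayoff n d x k)
    (hW : pathW d' x' (k + 1) ≤ pathW d x (k + 1)) : pathW d' x' k < pathW d x k := by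
  rw [pathW_eq_add_pathPayoff hk, pathW_eq_add_pathPayoff (d := d) hk]
  exact add_lt_add_of_le_of_lt hW hP

lemma apply_zero_lt_of_pathPayoff_lt (hI : IsPathInstance n d) (hI' : IsPathInstance n d')
    (hx : IsPathFixedPoint n d x) (hx' : IsPathFixedPoint n d' x') (hk : k ≤ n)
    (hd : ∀ m, 1 ≤ m → m ≤ k → d m ≤ d' m)
    (hP : pathPayoff n d' x' k < pathPayoff n d x k) (hW : pathW d' x' k < pathW d x k) :
    d' 0 < d 0 := by
  induction k with
  | zero => simpa using hW
  | succ k ih =>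
    have hPk := pathPayoff_lt_of_succ hI hI' hx hx' hk hP.le hW.le (hd (k + 1) (by omega) le_rfl)
      (Or.inl hP)
    exact ih (by omega) (fun m hm1 hmk => hd m hm1 (by omega)) hPk
      (pathW_lt_of_pathPayoff_lt_of_succ hk hPk hW.le)

lemma pathW_le_of_pathPayoff_le (hI : IsPathInstance n d) (hI' : IsPathInstance n d')
    (hx : IsPathFixedPoint n d x) (hx' : IsPathFixedPoint n d' x') (hk : k ≤ n)
    (hd : ∀ m, k < m → m ≤ n → d' m = d m)
    (hP : pathPayoff n d' x' k ≤ pathPayoff n d x k) : pathW d' x' k ≤ pathW d x k := by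
  induction hk using Nat.decreasingInduction with
  | self => rwa [pathPayoff_self, pathPayoff_self] at hP
  | of_succ k hk ih =>
    by_contra! hW
    have hW1 : pathW d x (k + 1) < pathW d' x' (k + 1) := by
      have := pathW_eq_add_pathPayoff (d := d) (x := x) hk
      have := pathW_eq_add_pathPayoff (d := d') (x := x') hk
      linarith
    have hP1 : pathPayoff n d' x' (k + 1) ≤ pathPayoff n d x (k + 1) := by
      by_contra! hP1
      exact (pathPayoff_lt_of_succ hI' hI hx' hx hk hP1.le hW1.le (hd (k + 1) (by omega) hk).le
        (Or.inl hP1)).not_ge hP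
    exact (ih (fun m hm hmn => hd m (by omega) hmn) hP1).not_gt hW1

end Comparison

theorem payoff_strict_monotone_general (n : ℕ) (d : ℕ → ℝ)
    (hd0 : 0 < d 0) (hd : ∀ j, 1 ≤ j → j ≤ n → 0 ≤ d j ∧ d j < d 0)
    (i : ℕ) (hi1 : 1 ≤ i) (hin : i ≤ n)
    (d' : ℝ) (hdi : d i < d') (hd'0 : d' < d 0)
    (x x' : ℕ → ℝ)
    (hx : IsPathFixedPoint n d x)
    (hx' : IsPathFixedPoint n (Function.update d i d') x') :
    (1 - (if i = n then 0 else x (i + 1))) * pathW d x i <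
      (1 - (if i = n then 0 else x' (i + 1))) * pathW (Function.update d i d') x' i := by
  set D := Function.update d i d'
  have hI : IsPathInstance n d := ⟨hd0, hd⟩
  have hI' : IsPathInstance n D := hI.update (by omega) ((hd i hi1 hin).1.trans hdi.le) hd'0
  change pathPayoff n d x i < pathPayoff n D x' i
  by_contra! hP
  obtain ⟨k, rfl⟩ : ∃ k, i = k + 1 := ⟨i - 1, by omega⟩
  have hD : ∀ m, m ≠ k + 1 → D m = d m := fun m hm => Function.update_of_ne hm _ _
  have hW : pathW D x' (k + 1) ≤ pathW d x (k + 1) :=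
    pathW_le_of_pathPayoff_le hI hI' hx hx' hin (fun m hm _ => hD m (by omega)) hP
  have hPk : pathPayoff n D x' k < pathPayoff n d x k :=
    pathPayoff_lt_of_succ hI hI' hx hx' hin hP hW (by simpa [D] using hdi.le)
      (Or.inr (by simpa [D] using hdi))
  have h0 := apply_zero_lt_of_pathPayoff_lt hI hI' hx hx' (k := k) (by omega)
    (fun m _ hm => (hD m (by omega)).ge) hPk
    (pathW_lt_of_pathPayoff_lt_of_succ hin hPk hW)
  rw [hD 0 (by omega)] at h0
  exact h0.false

/-- Strict monotonicity of payoffs: increasing `d i` (keeping it below `d 0`)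
strictly increases the payoff of node `i` at the fixed point. -/
theorem payoff_strict_monotone (n : ℕ) (hn : 1 ≤ n) (d : ℕ → ℝ)
    (hd0 : 0 < d 0) (hd : ∀ j, 1 ≤ j → j ≤ n → 0 ≤ d j ∧ d j < d 0)
    (i : ℕ) (hi1 : 1 ≤ i) (hin : i ≤ n)
    (d' : ℝ) (hdi : d i < d') (hd'0 : d' < d 0)
    (x x' : ℕ → ℝ)
    (hx : IsPathFixedPoint n d x)
    (hx' : IsPathFixedPoint n (Function.update d i d') x') :
    (1 - (if i = n then 0 else x (i + 1))) * pathW d x i <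
      (1 - (if i = n then 0 else x' (i + 1))) * pathW (Function.update d i d') x' i :=
  payoff_strict_monotone_general n d hd0 hd i hi1 hin d' hdi hd'0 x x' hx hx'
end

section
/- In any fixed point of the tree bargaining equations, if x_t = 1 for some non-root node t, then x_u = 1 for every node u that is a descendant of t (that is, the share equals 1 on every edge in the subtree rooted at t). -/
/-! When `x s = 1` at the parent `s` of `t`, the fixed-point equation at `t` reduces to
`(1 - x t) * w t = 0`, so the shares equal `1` all the way down once every value `w t` is
positive. Positivity propagates from the leaves up: a child `c` of `s` with `w c > 0` either
beats its siblings, so `x c * w c > w_{s∖c} ≥ 0`, or the equation at `c` forces `x c = 1`;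
either way `w s ≥ x c * w c > 0`. -/

/-- A finite rooted tree, given by a parent function: the root is its own
parent, and every node reaches the root by iterating `parent`. -/
structure BTree where
  V : Type
  [instFintype : Fintype V]
  [instDecEq : DecidableEq V]
  root : V
  parent : V → V
  parent_root : parent root = root
  reaches_root : ∀ t : V, ∃ k : ℕ, parent^[k] t = root

attribute [instance] BTree.instFintype BTree.instDecEq

/-- The children of a node `s`: the non-root nodes whose parent is `s`. -/
def BTree.children (T : BTree) (s : T.V) : Finset T.V :=
  Finset.univ.filter fun t => t ≠ T.root ∧ T.parent t = s

/-- A leaf is a node with no children. -/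
def BTree.IsLeaf (T : BTree) (l : T.V) : Prop :=
  T.children l = ∅

/-- Maximum of `f` over a finite set `F`, with value `0` when `F` is empty. -/
noncomputable def fmax {α : Type*} (F : Finset α) (f : α → ℝ) : ℝ :=
  sSup (insert 0 (f '' (F : Set α)))

/-- `w` is the value function determined by leaf values `v` and shares `x`:
`w l = v l` at each leaf `l`, and `w s = max_{t ∈ children s} x t · w t` at
each internal node `s`. -/
def IsValueFn (T : BTree) (v x w : T.V → ℝ) : Prop :=
  (∀ l, T.IsLeaf l → w l = v l) ∧
  ∀ s, ¬ T.IsLeaf s → w s = fmax (T.children s) fun t => x t * w t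

/-- `wexcl T x w s t`: the maximum value reaching `s` from its children other
than `t` (`0` when `t` is the only child). -/
noncomputable def wexcl (T : BTree) (x w : T.V → ℝ) (s t : T.V) : ℝ :=
  fmax ((T.children s).erase t) fun t' => x t' * w t'

/-- A fixed point of the tree bargaining equations: `x` is a share vector
(`x root = 0`, `x t ∈ [0,1]` off the root), `w` is the induced value function,
and for every non-root `t` with parent `s`:
`(1 − x t)·w t = (1 − x s)·(max(w_{s∖t}, x t · w t) − w_{s∖t})`. -/
def IsTreeFixedPoint (T : BTree) (v x w : T.V → ℝ) : Prop :=
  IsValueFn T v x w ∧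
  x T.root = 0 ∧
  (∀ t, t ≠ T.root → 0 ≤ x t ∧ x t ≤ 1) ∧
  ∀ t, t ≠ T.root →
    (1 - x t) * w t =
      (1 - x (T.parent t)) *
        (max (wexcl T x w (T.parent t) t) (x t * w t) - wexcl T x w (T.parent t) t)

noncomputable def bdepth (T : BTree) (u : T.V) : ℕ := Nat.find (T.reaches_root u)


namespace BTree

variable (T : BTree)

noncomputable def depth (u : T.V) : ℕ := Nat.find (T.reaches_root u)

lemma iterate_parent_depth (u : T.V) : T.parent^[T.depth u] u = T.root :=
  Nat.find_spec (T.reaches_root u)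

variable {T}

lemma depth_lt_depth_of_mem_children {u c : T.V} (hc : c ∈ T.children u) :
    T.depth u < T.depth c := by
  obtain ⟨hcr, hcu⟩ := (Finset.mem_filter.mp hc).2
  have hc0 : T.depth c ≠ 0 := fun h => hcr (by simpa [h] using T.iterate_parent_depth c)
  have hu : T.parent^[T.depth c - 1] u = T.root := by
    have := T.iterate_parent_depth c
    rwa [← Nat.sub_one_add_one hc0, Function.iterate_succ_apply, hcu] at this
  have : T.depth u ≤ T.depth c - 1 := Nat.find_min' (T.reaches_root u) hu
  omega

/-- Induction from the leaves up: depth is bounded on a finite tree and increases along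
child edges. -/
theorem induction_children {P : T.V → Prop} (h : ∀ u, (∀ c ∈ T.children u, P c) → P u)
    (u : T.V) : P u := by
  let D := Finset.univ.sup T.depth
  have hD : ∀ c, T.depth c ≤ D := fun c => Finset.le_sup (Finset.mem_univ c)
  induction u using (measure fun u => D - T.depth u).wf.induction with
  | h u ih =>
    refine h u fun c hc => ih c ?_
    have := depth_lt_depth_of_mem_children hc
    have := hD c
    show D - T.depth c < D - T.depth u
    omega

end BTree

lemma fmax_nonneg {α : Type*} (F : Finset α) (f : α → ℝ) : 0 ≤ fmax F f :=
  le_csSup ((F.finite_toSet.image f).insert 0).bddAbove (Set.mem_insert 0 _)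

lemma le_fmax {α : Type*} {F : Finset α} (f : α → ℝ) {a : α} (ha : a ∈ F) :
    f a ≤ fmax F f :=
  le_csSup ((F.finite_toSet.image f).insert 0).bddAbove
    (Set.mem_insert_of_mem _ ⟨a, Finset.mem_coe.mpr ha, rfl⟩)

namespace IsTreeFixedPoint

variable {T : BTree} {v x w : T.V → ℝ}

lemma share_eq_one_of_mul_eq_zero {t : T.V} (hw : 0 < w t) (h : (1 - x t) * w t = 0) :
    x t = 1 := by
  rcases mul_eq_zero.mp h with h | h <;> linarith

lemma share_eq_one_of_le_wexcl (hfp : IsTreeFixedPoint T v x w) {t : T.V} (ht : t ≠ T.root)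
    (hw : 0 < w t) (hle : x t * w t ≤ wexcl T x w (T.parent t) t) : x t = 1 := by
  refine share_eq_one_of_mul_eq_zero hw ?_
  rw [hfp.2.2.2 t ht, max_eq_left hle, sub_self, mul_zero]

lemma share_eq_one_of_parent (hfp : IsTreeFixedPoint T v x w) {t : T.V} (ht : t ≠ T.root)
    (hw : 0 < w t) (hp : x (T.parent t) = 1) : x t = 1 := by
  refine share_eq_one_of_mul_eq_zero hw ?_
  rw [hfp.2.2.2 t ht, hp, sub_self, zero_mul]

lemma value_pos (hfp : IsTreeFixedPoint T v x w) (hv : ∀ l, T.IsLeaf l → 0 < v l) (u : T.V) :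
    0 < w u := by
  induction u using BTree.induction_children with
  | h u ih =>
    by_cases hl : T.IsLeaf u
    · rw [hfp.1.1 u hl]
      exact hv u hl
    obtain ⟨c, hc⟩ := Finset.nonempty_iff_ne_empty.mpr hl
    obtain ⟨hcr, hcu⟩ := (Finset.mem_filter.mp hc).2
    have hwc := ih c hc
    have hxwc : 0 < x c * w c := by
      rcases le_or_gt (x c * w c) (wexcl T x w (T.parent c) c) with hle | hlt
      · rwa [hfp.share_eq_one_of_le_wexcl hcr hwc hle, one_mul]
      · exact (fmax_nonneg _ _).trans_lt hlt
    rw [hfp.1.2 u hl]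
    exact hxwc.trans_le (le_fmax (fun t => x t * w t) hc)

end IsTreeFixedPoint

theorem tree_shares_one_subtree_general (T : BTree) (v x w : T.V → ℝ)
    (hv : ∀ l, T.IsLeaf l → 0 < v l)
    (hfp : IsTreeFixedPoint T v x w) :
    ∀ t, t ≠ T.root → x t = 1 →
      ∀ u, (∃ k : ℕ, T.parent^[k] u = t) → x u = 1 := by
  rintro t ht hxt u ⟨k, hk⟩
  induction k generalizing u with
  | zero => rwa [← hk] at hxt
  | succ k ih =>
    rw [Function.iterate_succ_apply] at hk
    have hur : u ≠ T.root := by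
      rintro rfl
      exact ht (by rw [← hk, T.parent_root, Function.iterate_fixed T.parent_root])
    exact hfp.share_eq_one_of_parent hur (hfp.value_pos hv u) (ih _ hk)

/-- In any fixed point, if `x t = 1` for a non-root node `t`, then `x u = 1`
for every descendant `u` of `t`. -/
theorem tree_shares_one_subtree (T : BTree) (v x w : T.V → ℝ)
    (hv : ∀ l, T.IsLeaf l → 0 < v l) (hroot : ¬ T.IsLeaf T.root)
    (hfp : IsTreeFixedPoint T v x w) :
    ∀ t, t ≠ T.root → x t = 1 →
      ∀ u, (∃ k : ℕ, T.parent^[k] u = t) → x u = 1 :=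
  tree_shares_one_subtree_general T v x w hv hfp
end
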